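/- arXiv:1509.05633 — 4 statements merged into one kernel-verified Lean document; each statement's English description precedes it below -/
import Mathlib

section
/- Let γ ∈ (1/2)ℕ with γ ≥ 1/2, A = ±1, λ ∈ (1/2)ℤ and ρ ∈ ℂ with ρ ∉ ±(|λ|+ℕ). Then the following are equivalent: (a) for all μ, ν ∈ M_γ with μ ≠ ν, both i(λ+μ)(ρ+Aμ) ≠ i(λ+ν)(ρ+Aν) and (λ+μ)² + (ρ+Aμ)² − 1 ≠ (λ+ν)² + (ρ+Aν)² − 1; (b) ρ + Aλ ∉ (−2γ, 2γ) ∩ ℤ. -/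
noncomputable section

/-- `M_γ = {−γ, −γ+1, …, γ}`. -/
def FIdx (gam : ℝ) : Set ℝ := {mu | (∃ i : ℕ, mu = -gam + i) ∧ mu ≤ gam}

/-- `ρ ∉ ±(|λ|+ℕ)`. -/
def InfiniteDim (lam : ℝ) (rho : ℂ) : Prop :=
  ∀ n : ℕ, 0 < n → rho ≠ ((|lam| + n : ℝ) : ℂ) ∧ rho ≠ -((|lam| + n : ℝ) : ℂ)

/-- (Lemma: distinctness of candidate Casimir eigenvalue pairs.) -/
theorem distinct_eigenvalues_iff
    (gam A lam : ℝ) (rho : ℂ)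
    (hgam : ∃ n : ℕ, gam = n / 2) (hgam' : 1/2 ≤ gam)
    (hA : A = 1 ∨ A = -1)
    (hlam : ∃ k : ℤ, lam = k / 2)
    (hinf : InfiniteDim lam rho) :
    ((∀ mu ∈ FIdx gam, ∀ nu ∈ FIdx gam, mu ≠ nu →
        Complex.I * ((lam : ℂ) + (mu : ℂ)) * (rho + (A : ℂ) * (mu : ℂ)) ≠
          Complex.I * ((lam : ℂ) + (nu : ℂ)) * (rho + (A : ℂ) * (nu : ℂ)) ∧
        ((lam : ℂ) + (mu : ℂ))^2 + (rho + (A : ℂ) * (mu : ℂ))^2 - 1 ≠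
          ((lam : ℂ) + (nu : ℂ))^2 + (rho + (A : ℂ) * (nu : ℂ))^2 - 1) ↔
      ¬ ∃ k : ℤ, rho + (A : ℂ) * (lam : ℂ) = (k : ℂ) ∧
        -(2 * gam) < (k : ℝ) ∧ (k : ℝ) < 2 * gam) := by
  obtain ⟨n, rfl⟩ := hgam
  have hA2 : ((A : ℝ) : ℂ) ^ 2 = 1 := by
    rcases hA with h | h <;> rw [h] <;> norm_num
  constructor
  · rintro H ⟨k, hk, hk2, hk3⟩
    have hkn : k < (n : ℤ) := by exact_mod_cast show (k : ℝ) < (n : ℤ) by push_cast; linarith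
    have hkn' : -(n : ℤ) < k := by
      exact_mod_cast show ((-(n : ℤ) : ℤ) : ℝ) < k by push_cast; linarith
    obtain ⟨m, hmk, hm1, hm2⟩ : ∃ m : ℤ, (A : ℝ) * m = -k ∧ -(n : ℤ) < m ∧ m < n := by
      rcases hA with h | h
      · exact ⟨-k, by rw [h]; push_cast; ring, by omega, by omega⟩
      · exact ⟨k, by rw [h]; push_cast; ring, hkn', hkn⟩
    obtain ⟨i, j, hij, hin, hjn, hsum⟩ :
        ∃ i j : ℕ, i ≠ j ∧ i ≤ n ∧ j ≤ n ∧ (i : ℤ) + j = m + n := by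
      rcases le_or_gt m 0 with h | h
      · exact ⟨0, (m + n).toNat, by omega, by omega, by omega, by omega⟩
      · exact ⟨m.toNat, n, by omega, by omega, le_rfl, by omega⟩
    set mu : ℝ := -((n : ℝ) / 2) + i with hmu_def
    set nu : ℝ := -((n : ℝ) / 2) + j with hnu_def
    have hmu : mu ∈ FIdx ((n : ℝ) / 2) := by
      refine ⟨⟨i, rfl⟩, ?_⟩
      have : (i : ℝ) ≤ n := by exact_mod_cast hin
      rw [hmu_def]; linarith
    have hnu : nu ∈ FIdx ((n : ℝ) / 2) := by
      refine ⟨⟨j, rfl⟩, ?_⟩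
      have : (j : ℝ) ≤ n := by exact_mod_cast hjn
      rw [hnu_def]; linarith
    have hne : mu ≠ nu := by
      rw [hmu_def, hnu_def]
      intro h
      exact hij (by exact_mod_cast show (i : ℝ) = j by linarith [add_left_cancel h])
    have hR : (A : ℝ) * (mu + nu) = -(k : ℝ) := by
      have hsR : mu + nu = (m : ℝ) := by
        rw [hmu_def, hnu_def]
        have : ((i : ℤ) : ℝ) + ((j : ℤ) : ℝ) = ((m : ℤ) : ℝ) + ((n : ℤ) : ℝ) := by
          exact_mod_cast congrArg (fun x : ℤ => (x : ℝ)) hsum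
        push_cast at this ⊢
        linarith
      rw [hsR, hmk]
    have hC : ((A : ℝ) : ℂ) * ((mu : ℝ) + (nu : ℝ) : ℂ) = -((k : ℤ) : ℂ) := by
      have := congrArg (fun x : ℝ => (x : ℂ)) hR
      push_cast at this ⊢
      exact this
    refine (H mu hmu nu hnu hne).1 ?_
    push_cast at hC
    linear_combination Complex.I * ((mu : ℂ) - (nu : ℂ)) * hk +
      Complex.I * ((mu : ℂ) - (nu : ℂ)) * hC
  · intro H mu hmu nu hnu hne
    obtain ⟨⟨i, hi⟩, hile⟩ := hmu
    obtain ⟨⟨j, hj⟩, hjle⟩ := hnu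
    have hij : i ≠ j := by
      intro h; exact hne (by rw [hi, hj, h])
    have hiN : i ≤ n := by
      have : (i : ℝ) ≤ n := by rw [hi] at hile; linarith
      exact_mod_cast this
    have hjN : j ≤ n := by
      have : (j : ℝ) ≤ n := by rw [hj] at hjle; linarith
      exact_mod_cast this
    have hsR : mu + nu = -(n : ℝ) + i + j := by rw [hi, hj]; ring
    have hkey : rho + ((A : ℝ) : ℂ) * (lam : ℂ) + ((A : ℝ) : ℂ) * ((mu : ℂ) + (nu : ℂ)) ≠ 0 := by
      intro h0
      obtain ⟨k, hkR, hb1, hb2⟩ :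
          ∃ k : ℤ, (k : ℝ) = -(A : ℝ) * (mu + nu) ∧ -(n : ℤ) < k ∧ k < n := by
        rcases hA with h | h
        · refine ⟨(n : ℤ) - i - j, by push_cast [hsR, h]; ring, by omega, by omega⟩
        · refine ⟨(i : ℤ) + j - n, by push_cast [hsR, h]; ring, by omega, by omega⟩
      refine H ⟨k, ?_, ?_, ?_⟩
      · have hCk : ((k : ℤ) : ℂ) = -((A : ℝ) : ℂ) * ((mu : ℂ) + (nu : ℂ)) := by
          have := congrArg (fun x : ℝ => (x : ℂ)) hkR
          push_cast at this ⊢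
          exact this
        rw [hCk]
        linear_combination h0
      · have : (-(n : ℤ) : ℝ) < (k : ℝ) := by exact_mod_cast hb1
        push_cast at this ⊢
        linarith
      · have : (k : ℝ) < ((n : ℤ) : ℝ) := by exact_mod_cast hb2
        push_cast at this ⊢
        linarith
    constructor
    · intro heq
      apply hkey
      have h1 :=
        mul_left_cancel₀ Complex.I_ne_zero
          (show Complex.I * (((lam : ℂ) + (mu : ℂ)) * (rho + ((A : ℝ) : ℂ) * (mu : ℂ))) =
              Complex.I * (((lam : ℂ) + (nu : ℂ)) * (rho + ((A : ℝ) : ℂ) * (nu : ℂ))) by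
            linear_combination heq)
      have hnec : (mu : ℂ) - (nu : ℂ) ≠ 0 := by
        intro h
        exact hne (by exact_mod_cast sub_eq_zero.mp h)
      have h2 : ((mu : ℂ) - (nu : ℂ)) *
          (rho + ((A : ℝ) : ℂ) * (lam : ℂ) + ((A : ℝ) : ℂ) * ((mu : ℂ) + (nu : ℂ))) = 0 := by
        linear_combination h1
      exact (mul_eq_zero.mp h2).resolve_left hnec
    · intro heq
      apply hkey
      have hnec : (mu : ℂ) - (nu : ℂ) ≠ 0 := by
        intro h
        exact hne (by exact_mod_cast sub_eq_zero.mp h)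
      have h2 : ((mu : ℂ) - (nu : ℂ)) *
          (rho + ((A : ℝ) : ℂ) * (lam : ℂ) + ((A : ℝ) : ℂ) * ((mu : ℂ) + (nu : ℂ))) = 0 := by
        linear_combination (((A : ℝ) : ℂ) / 2) * heq +
          (-((mu : ℂ) - (nu : ℂ)) * rho -
            (((A : ℝ) : ℂ) / 2) * ((mu : ℂ) - (nu : ℂ)) * ((mu : ℂ) + (nu : ℂ))) * hA2
      exact (mul_eq_zero.mp h2).resolve_left hnec
end
end

section
/- Let K be a field, n ≥ 1, and let A be an n×n tridiagonal matrix over K (A_{ij} = 0 whenever |i−j| > 1) all of whose superdiagonal entries A_{i,i+1} (1 ≤ i ≤ n−1) are nonzero. Then A is diagonalisable over K if and only if A has n distinct eigenvalues in K. -/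
/-! If `A` is tridiagonal with nonzero superdiagonal, row `k` of `A v = μ v` determines
`v (k + 1)` from `v 0, …, v k`, so an eigenvector is determined by its first entry and every
eigenspace has dimension at most one. For an endomorphism with this property an eigenbasis exists
iff there are as many eigenvalues as the dimension: eigenvectors for distinct eigenvalues are
independent, and conversely the eigenvalues of an eigenbasis exhaust the spectrum and are pairwise
distinct, since two basis vectors cannot share a line. -/

open Module Module.End Matrix

section Eigenbasis

variable {K V ι : Type*} [Field K] [AddCommGroup V] [Module K V] [Fintype ι] {f : End K V}

theorem Module.End.hasEigenvalue_iff_of_apply_basis (b : Basis ι K V) {ev : ι → K}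
    (hb : ∀ i, f (b i) = ev i • b i) {μ : K} : f.HasEigenvalue μ ↔ ∃ i, ev i = μ := by
  classical
  obtain rfl : f = toLin b b (diagonal ev) :=
    b.ext fun i ↦ (hb i).trans (hasEigenvector_toLin_diagonal ev i b).apply_eq_smul.symm
  exact hasEigenvalue_toLin_diagonal_iff ev b

variable [FiniteDimensional K V]

theorem Module.End.injective_of_finrank_eigenspace_le_one
    (hf : ∀ μ, finrank K (f.eigenspace μ) ≤ 1) (b : Basis ι K V) {ev : ι → K}
    (hb : ∀ i, f (b i) = ev i • b i) : Function.Injective ev := by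
  classical
  intro i j hij
  let u : {k // ev k = ev i} → f.eigenspace (ev i) :=
    fun k ↦ ⟨b k, by rw [mem_eigenspace_iff, hb, k.2]⟩
  have hu : LinearIndependent K u :=
    .of_comp (f.eigenspace (ev i)).subtype (b.linearIndependent.comp _ Subtype.val_injective)
  have : Subsingleton {k // ev k = ev i} :=
    Fintype.card_le_one_iff_subsingleton.mp (hu.fintype_card_le_finrank.trans (hf _))
  exact congrArg Subtype.val (Subsingleton.elim (⟨i, rfl⟩ : {k // ev k = ev i}) ⟨j, hij.symm⟩)

theorem Module.End.exists_eigenbasis_of_ncard_eq (hι : Fintype.card ι = finrank K V)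
    (hcard : {μ | f.HasEigenvalue μ}.ncard = Fintype.card ι) :
    ∃ (b : Basis ι K V) (ev : ι → K), ∀ i, f (b i) = ev i • b i := by
  have : Finite {μ | f.HasEigenvalue μ} := f.finite_hasEigenvalue
  obtain ⟨e⟩ : Nonempty (ι ≃ {μ | f.HasEigenvalue μ}) := by
    rw [← Finite.card_eq, Nat.card_coe_set_eq, hcard, Nat.card_eq_fintype_card]
  choose v hv using fun i ↦ (e i).2.exists_hasEigenvector
  have hli := f.eigenvectors_linearIndependent' (fun i ↦ (e i : K))
    (Subtype.val_injective.comp e.injective) v hv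
  exact ⟨basisOfLinearIndependentOfCardEqFinrank' v hli hι, fun i ↦ e i,
    fun i ↦ by simpa using (hv i).apply_eq_smul⟩

theorem Module.End.exists_eigenbasis_iff_ncard_eq (hf : ∀ μ, finrank K (f.eigenspace μ) ≤ 1)
    (hι : Fintype.card ι = finrank K V) :
    (∃ (b : Basis ι K V) (ev : ι → K), ∀ i, f (b i) = ev i • b i) ↔
      {μ | f.HasEigenvalue μ}.ncard = Fintype.card ι := by
  refine ⟨fun ⟨b, ev, hb⟩ ↦ ?_, exists_eigenbasis_of_ncard_eq hι⟩
  have hrange : {μ | f.HasEigenvalue μ} = Set.range ev :=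
    Set.ext fun μ ↦ hasEigenvalue_iff_of_apply_basis b hb
  rw [hrange, Set.ncard_range_of_injective (injective_of_finrank_eigenspace_le_one hf b hb),
    Nat.card_eq_fintype_card]

end Eigenbasis

theorem Matrix.eq_zero_of_mulVec_eq_smul_of_head_eq_zero {R : Type*} [Semiring R]
    [NoZeroDivisors R] {n : ℕ} {A : Matrix (Fin n) (Fin n) R}
    (htri : ∀ i j : Fin n, 1 < ((i : ℤ) - (j : ℤ)).natAbs → A i j = 0)
    (hsup : ∀ (i : ℕ) (hi : i + 1 < n), A ⟨i, Nat.lt_of_succ_lt hi⟩ ⟨i + 1, hi⟩ ≠ 0)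
    {μ : R} {v : Fin n → R} (hv : A *ᵥ v = μ • v) (h0 : ∀ h : 0 < n, v ⟨0, h⟩ = 0) :
    v = 0 := by
  suffices ∀ k (hk : k < n), v ⟨k, hk⟩ = 0 from funext fun i ↦ this i i.isLt
  intro k
  induction k using Nat.strong_induction_on with
  | _ k ih =>
  rcases k with _ | k
  · exact h0
  intro hk
  have hk' : k < n := Nat.lt_of_succ_lt hk
  have hrow : A ⟨k, hk'⟩ ⟨k + 1, hk⟩ * v ⟨k + 1, hk⟩ = 0 := by
    have hkk := congrFun hv ⟨k, hk'⟩
    rw [Pi.smul_apply, ih k k.lt_succ_self hk', smul_zero, mulVec, dotProduct] at hkk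
    rwa [Finset.sum_eq_single_of_mem _ (Finset.mem_univ _) fun j _ hj ↦ ?_] at hkk
    have hj' : (j : ℕ) ≠ k + 1 := fun h ↦ hj (Fin.ext h)
    rcases lt_or_gt_of_ne hj' with hlt | hgt
    · rw [ih j (by omega) j.isLt, mul_zero]
    · rw [htri _ _ (by simp only; omega), zero_mul]
  exact (mul_eq_zero.mp hrow).resolve_left (hsup k hk)

theorem Matrix.finrank_eigenspace_toLin'_le_one {K : Type*} [Field K] {n : ℕ}
    {A : Matrix (Fin n) (Fin n) K}
    (htri : ∀ i j : Fin n, 1 < ((i : ℤ) - (j : ℤ)).natAbs → A i j = 0)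
    (hsup : ∀ (i : ℕ) (hi : i + 1 < n), A ⟨i, Nat.lt_of_succ_lt hi⟩ ⟨i + 1, hi⟩ ≠ 0) (μ : K) :
    finrank K (eigenspace (toLin' A) μ) ≤ 1 := by
  rcases Nat.eq_zero_or_pos n with rfl | hn
  · exact (Submodule.finrank_le _).trans (by simp)
  let head : eigenspace (toLin' A) μ →ₗ[K] K :=
    (LinearMap.proj ⟨0, hn⟩).comp (Submodule.subtype _)
  have hhead : Function.Injective head := by
    rw [← LinearMap.ker_eq_bot, LinearMap.ker_eq_bot']
    exact fun v hv ↦ Subtype.ext <| eq_zero_of_mulVec_eq_smul_of_head_eq_zero htri hsup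
      (mem_eigenspace_iff.mp v.2) fun _ ↦ hv
  simpa using LinearMap.finrank_le_finrank_of_injective hhead

theorem tridiagonal_diagonalisable_iff_distinct_eigenvalues_general
    {K : Type*} [Field K] (n : ℕ) (A : Matrix (Fin n) (Fin n) K)
    (htri : ∀ i j : Fin n, 1 < ((i : ℤ) - (j : ℤ)).natAbs → A i j = 0)
    (hsup : ∀ (i : ℕ) (hi : i + 1 < n), A ⟨i, Nat.lt_of_succ_lt hi⟩ ⟨i + 1, hi⟩ ≠ 0) :
    (∃ (b : Module.Basis (Fin n) K (Fin n → K)) (ev : Fin n → K),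
        ∀ i, Matrix.toLin' A (b i) = ev i • b i) ↔
      {mu : K | LinearMap.ker (Matrix.toLin' (A - mu • 1)) ≠ ⊥}.ncard = n := by
  have heigenvalues : {mu : K | LinearMap.ker (Matrix.toLin' (A - mu • 1)) ≠ ⊥} =
      {μ | HasEigenvalue (toLin' A) μ} := by
    ext μ
    simp [hasEigenvalue_iff, eigenspace_def, Module.End.one_eq_id]
  rw [heigenvalues]
  simpa using exists_eigenbasis_iff_ncard_eq (finrank_eigenspace_toLin'_le_one htri hsup)
    (ι := Fin n) (by simp)

/-- A tridiagonal matrix with nonvanishing superdiagonal is diagonalisable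
if and only if it has `n` distinct eigenvalues. -/
theorem tridiagonal_diagonalisable_iff_distinct_eigenvalues
    {K : Type*} [Field K] (n : ℕ) (hn : 1 ≤ n) (A : Matrix (Fin n) (Fin n) K)
    (htri : ∀ i j : Fin n, 1 < ((i : ℤ) - (j : ℤ)).natAbs → A i j = 0)
    (hsup : ∀ (i : ℕ) (hi : i + 1 < n), A ⟨i, Nat.lt_of_succ_lt hi⟩ ⟨i + 1, hi⟩ ≠ 0) :
    (∃ (b : Module.Basis (Fin n) K (Fin n → K)) (ev : Fin n → K),
        ∀ i, Matrix.toLin' A (b i) = ev i • b i) ↔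
      {mu : K | LinearMap.ker (Matrix.toLin' (A - mu • 1)) ≠ ⊥}.ncard = n :=
  tridiagonal_diagonalisable_iff_distinct_eigenvalues_general n A htri hsup
end

section
/- Let λ ∈ (1/2)ℤ and γ ∈ (1/2)ℕ with γ ≥ 1/2. Set ε = 0 if λ+γ ∈ ℤ and ε = 1/2 otherwise. Then the union over ν ∈ M_γ of the sets |λ+ν| + ℕ₀ equals the set max(ε, |λ|−γ) + ℕ₀. -/
private lemma exists_nat_of_int_gap (x y : ℝ) (h1 : y ≤ x) (h2 : ∃ d : ℤ, x - y = d) :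
    ∃ n : ℕ, x = y + n := by
  obtain ⟨d, hd⟩ := h2
  have hd0 : (0:ℝ) ≤ (d:ℝ) := by linarith
  have hd0' : 0 ≤ d := by exact_mod_cast hd0
  refine ⟨d.toNat, ?_⟩
  have h2 : ((d.toNat : ℤ)) = d := Int.toNat_of_nonneg hd0'
  have : ((d.toNat : ℕ) : ℝ) = (d : ℝ) := by exact_mod_cast congrArg (fun z : ℤ => (z:ℝ)) h2
  rw [this]; linarith

/-- `⋃_{ν ∈ M_γ} (|λ+ν| + ℕ₀) = max(ε, |λ|−γ) + ℕ₀`. -/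
theorem union_of_sigma_sets (lam gam eps : ℝ)
    (hlam : ∃ k : ℤ, lam = k / 2)
    (hgam : ∃ n : ℕ, gam = n / 2) (hgam' : 1/2 ≤ gam)
    (heps0 : (∃ k : ℤ, lam + gam = (k : ℝ)) → eps = 0)
    (heps1 : (¬ ∃ k : ℤ, lam + gam = (k : ℝ)) → eps = 1/2) :
    (⋃ ν ∈ FIdx gam, {x : ℝ | ∃ n : ℕ, x = |lam + ν| + n})
      = {x : ℝ | ∃ n : ℕ, x = max eps (|lam| - gam) + n} := by
  obtain ⟨k, hk⟩ := hlam
  obtain ⟨n0, hn0⟩ := hgam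
  -- the common coset property
  set P : ℝ → Prop := fun a => ∃ j : ℤ, a = lam + gam + j with hP
  have gap : ∀ a b : ℝ, P a → P b → ∃ d : ℤ, a - b = d := by
    rintro a b ⟨j1, hj1⟩ ⟨j2, hj2⟩
    exact ⟨j1 - j2, by push_cast; linarith⟩
  have Peps : P eps := by
    by_cases hε : ∃ j : ℤ, lam + gam = (j : ℝ)
    · obtain ⟨j, hj⟩ := hε
      rw [heps0 ⟨j, hj⟩]
      exact ⟨-j, by push_cast; linarith⟩
    · rw [heps1 hε]
      rcases Int.even_or_odd (k + n0) with ⟨q, hq⟩ | ⟨q, hq⟩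
      · exfalso; apply hε; refine ⟨q, ?_⟩
        have hq' : (k : ℝ) + n0 = q + q := by exact_mod_cast hq
        rw [hk, hn0]; linarith
      · refine ⟨-q, ?_⟩
        have : (k : ℝ) + n0 = 2 * q + 1 := by exact_mod_cast hq
        rw [hk, hn0]; push_cast; linarith
  have Pabs : P (|lam| - gam) := by
    rcases abs_cases lam with ⟨h, _⟩ | ⟨h, _⟩
    · exact ⟨-(n0 : ℤ), by rw [h, hn0]; push_cast; linarith⟩
    · exact ⟨-(k + n0), by rw [h, hk, hn0]; push_cast; linarith⟩
  have Pmax : P (max eps (|lam| - gam)) := by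
    rcases max_cases eps (|lam| - gam) with ⟨h, _⟩ | ⟨h, _⟩ <;> rw [h] <;>
      [exact Peps; exact Pabs]
  -- half-odd structure when lam+gam ∉ ℤ
  have halfodd : (¬ ∃ j : ℤ, lam + gam = (j : ℝ)) → ∃ q : ℤ, lam + gam = q + 1/2 := by
    intro hε
    rcases Int.even_or_odd (k + n0) with ⟨q, hq⟩ | ⟨q, hq⟩
    · exfalso; apply hε
      refine ⟨q, ?_⟩
      have hq' : (k : ℝ) + n0 = q + q := by exact_mod_cast hq
      rw [hk, hn0]; linarith
    · refine ⟨q, ?_⟩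
      have : (k : ℝ) + n0 = 2 * q + 1 := by exact_mod_cast hq
      rw [hk, hn0]; push_cast; linarith
  -- if a satisfies P, a ≥ 0, and lam+gam ∉ ℤ, then a ≥ 1/2
  have ge_half : (¬ ∃ j : ℤ, lam + gam = (j : ℝ)) → ∀ a : ℝ, P a → 0 ≤ a → 1/2 ≤ a := by
    intro hε a ⟨j, hj⟩ ha
    obtain ⟨q, hq⟩ := halfodd hε
    have hval : a = (q + j : ℤ) + 1/2 := by push_cast; linarith
    have h1 : (-1 : ℝ) < ((q + j : ℤ) : ℝ) := by rw [hval] at ha; linarith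
    have h2 : (-1 : ℤ) < q + j := by exact_mod_cast h1
    have h3 : (0 : ℝ) ≤ ((q + j : ℤ) : ℝ) := by exact_mod_cast (by omega : (0:ℤ) ≤ q + j)
    linarith [hval]
  have heps_nonneg : 0 ≤ eps := by
    by_cases hε : ∃ j : ℤ, lam + gam = (j : ℝ)
    · rw [heps0 hε]
    · rw [heps1 hε]; norm_num
  ext x
  simp only [Set.mem_iUnion, Set.mem_setOf_eq, FIdx]
  constructor
  · rintro ⟨ν, ⟨⟨i, hi⟩, hle⟩, n, rfl⟩
    have Pν : P (|lam + ν|) := by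
      rcases abs_cases (lam + ν) with ⟨h, _⟩ | ⟨h, _⟩
      · exact ⟨(i : ℤ) - n0, by rw [h, hi, hn0]; push_cast; linarith⟩
      · exact ⟨-(k + i), by rw [h, hi, hk, hn0]; push_cast; linarith⟩
    have hge : max eps (|lam| - gam) ≤ |lam + ν| := by
      have hν2 : |ν| ≤ gam := abs_le.mpr
        ⟨by rw [hi]; linarith [(by positivity : (0:ℝ) ≤ (i:ℝ))], hle⟩
      have habs : |lam| - gam ≤ |lam + ν| := by
        have := abs_sub_abs_le_abs_sub (lam + ν) ν
        simp only [add_sub_cancel_right] at this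
        have := abs_le.mp hν2
        calc |lam| - gam ≤ |lam| - |ν| := by linarith [abs_le.mp hν2]
          _ ≤ |lam + ν| := by
            have h := abs_add_le (lam + ν) (-ν)
            simp only [add_neg_cancel_right, abs_neg] at h
            linarith
      have hepsle : eps ≤ |lam + ν| := by
        by_cases hε : ∃ j : ℤ, lam + gam = (j : ℝ)
        · rw [heps0 hε]; exact abs_nonneg _
        · rw [heps1 hε]; exact ge_half hε _ Pν (abs_nonneg _)
      exact max_le hepsle habs
    obtain ⟨d, hd⟩ := gap _ _ Pν Pmax
    refine exists_nat_of_int_gap _ _ (by linarith [Nat.cast_nonneg (α := ℝ) n]) ⟨d + n, ?_⟩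
    push_cast; linarith
  · rintro ⟨n, rfl⟩
    -- find ν ∈ FIdx gam with |lam + ν| = max eps (|lam| - gam)
    suffices h : ∃ ν, ((∃ i : ℕ, ν = -gam + i) ∧ ν ≤ gam) ∧
        |lam + ν| = max eps (|lam| - gam) by
      obtain ⟨ν, hν, hval⟩ := h
      exact ⟨ν, hν, n, by rw [hval]⟩
    have hgam0 : (0:ℝ) < gam := by linarith
    by_cases hcase : gam ≤ |lam|
    · -- extreme case: take ν = ±gam
      have hmax : max eps (|lam| - gam) = |lam| - gam := by
        apply max_eq_right
        by_cases hε : ∃ j : ℤ, lam + gam = (j : ℝ)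
        · rw [heps0 hε]; linarith
        · rw [heps1 hε]; exact ge_half hε _ Pabs (by linarith)
      rcases abs_cases lam with ⟨h, h0⟩ | ⟨h, h0⟩
      · refine ⟨-gam, ⟨⟨0, by norm_num⟩, by linarith⟩, ?_⟩
        rw [hmax, h]
        rw [abs_of_nonneg (by rw [h] at hcase; linarith)]
        ring
      · refine ⟨gam, ⟨⟨n0, by rw [hn0]; push_cast; ring⟩, le_refl _⟩, ?_⟩
        rw [hmax, h]
        rw [abs_of_nonpos (by rw [h] at hcase; linarith)]
        ring
    · -- |lam| < gam : take ν hitting eps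
      push_neg at hcase
      have hmax : max eps (|lam| - gam) = eps :=
        max_eq_left (by linarith)
      rw [hmax]
      have hl1 : -gam < lam := (abs_lt.mp hcase).1
      have hl2 : lam < gam := (abs_lt.mp hcase).2
      by_cases hε : ∃ j : ℤ, lam + gam = (j : ℝ)
      · obtain ⟨j, hj⟩ := hε
        refine ⟨-lam, ⟨⟨(n0 - j).toNat, ?_⟩, by linarith⟩, ?_⟩
        · have hjle : j ≤ n0 := by
            have : (j : ℝ) < (n0 : ℝ) := by rw [← hj, hn0]; push_cast; linarith
            exact_mod_cast this.le
          have : (((n0 - j).toNat : ℕ) : ℝ) = (n0 : ℝ) - j := by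
            have h2 := Int.toNat_of_nonneg (by omega : 0 ≤ (n0:ℤ) - j)
            exact_mod_cast congrArg (fun z : ℤ => (z:ℝ)) h2
          rw [this, hn0]
          have : (j : ℝ) = lam + gam := hj.symm
          rw [this, hn0]; ring
        · rw [heps0 ⟨j, hj⟩]; simp
      · obtain ⟨q, hq⟩ := halfodd hε
        refine ⟨1/2 - lam, ⟨⟨(n0 - q).toNat, ?_⟩, ?_⟩, ?_⟩
        · have hqle : q ≤ n0 := by
            have : (q : ℝ) < (n0 : ℝ) := by
              have : (q:ℝ) = lam + gam - 1/2 := by linarith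
              rw [this, hn0]; push_cast; linarith
            exact_mod_cast this.le
          have hcast : (((n0 - q).toNat : ℕ) : ℝ) = (n0 : ℝ) - q := by
            have h2 := Int.toNat_of_nonneg (by omega : 0 ≤ (n0:ℤ) - q)
            exact_mod_cast congrArg (fun z : ℤ => (z:ℝ)) h2
          rw [hcast, hn0]
          have : (q : ℝ) = lam + gam - 1/2 := by linarith
          rw [this, hn0]; ring
        · -- 1/2 - lam ≤ gam, i.e. 1/2 ≤ lam + gam
          have hq0 : (0:ℤ) ≤ q := by
            have h1 : (-1:ℝ) < (q:ℝ) := by linarith [hq ▸ (by linarith : (0:ℝ) < lam + gam)]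
            have : (-1:ℤ) < q := by exact_mod_cast h1
            omega
          have : (0:ℝ) ≤ (q:ℝ) := by exact_mod_cast hq0
          linarith
        · rw [heps1 hε]
          have : lam + (1/2 - lam) = 1/2 := by ring
          rw [this]; norm_num
end

section
/- Let λ ∈ (1/2)ℤ and γ ∈ (1/2)ℕ with γ ≥ 1/2. Set ε = 0 if λ+γ ∈ ℤ and ε = 1/2 otherwise. Then for every J ∈ max(ε, |λ|−γ) + ℕ₀, the number of elements ν ∈ M_γ with J ∈ |λ+ν| + ℕ₀ equals min(J + γ − |λ| + 1, 2γ + 1) if J ≥ ||λ| − γ|, and equals 2J + 1 if J < ||λ| − γ|. -/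
/-- The multiplicity count `∑_{ν ∈ M_γ} χ_{|λ+ν|+ℕ₀}(J) = dim V^J_M`. -/
theorem multiplicity_count (lam gam eps : ℝ)
    (hlam : ∃ k : ℤ, lam = k / 2)
    (hgam : ∃ n : ℕ, gam = n / 2) (hgam' : 1/2 ≤ gam)
    (heps0 : (∃ k : ℤ, lam + gam = (k : ℝ)) → eps = 0)
    (heps1 : (¬ ∃ k : ℤ, lam + gam = (k : ℝ)) → eps = 1/2) :
    ∀ (n : ℕ) (J : ℝ), J = max eps (|lam| - gam) + n →
      ((abs (|lam| - gam) ≤ J →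
        ({ν ∈ FIdx gam | ∃ m : ℕ, J = |lam + ν| + m}.ncard : ℝ)
          = min (J + gam - |lam| + 1) (2 * gam + 1)) ∧
      (J < abs (|lam| - gam) →
        ({ν ∈ FIdx gam | ∃ m : ℕ, J = |lam + ν| + m}.ncard : ℝ) = 2 * J + 1)) := by
  obtain ⟨k, hk⟩ := hlam
  obtain ⟨g, hg⟩ := hgam
  intro n J hJ
  obtain ⟨K, hKk, hK2⟩ : ∃ K : ℤ, (K = k ∨ K = -k) ∧ |k| = K := ⟨|k|, abs_choice k, rfl⟩
  have hK0 : 0 ≤ K := hK2 ▸ abs_nonneg k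
  have habs : |lam| = (K : ℝ)/2 := by
    rw [hk, abs_div, abs_two, ← Int.cast_abs, hK2]
  -- construct the integer j = 2J
  obtain ⟨j, hj2, hj0, hjK, hjp⟩ :
      ∃ j : ℤ, (j:ℝ) = 2*J ∧ 0 ≤ j ∧ K - g ≤ j ∧ (j + k + g) % 2 = 0 := by
    by_cases hpar : ∃ m : ℤ, lam + gam = (m:ℝ)
    · obtain ⟨m, hm⟩ := hpar
      have hkg : k + (g:ℤ) = 2*m := by
        have : (k:ℝ) + g = 2*m := by rw [hk, hg] at hm; linarith
        exact_mod_cast this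
      have he : eps = 0 := heps0 ⟨m, hm⟩
      rcases le_total K g with hKg | hKg
      · refine ⟨2*(n:ℤ), ?_, by positivity, by omega, by omega⟩
        have hmax : max eps (|lam| - gam) = 0 := by
          rw [he, habs, hg]
          apply max_eq_left
          have : (K:ℝ) ≤ g := by exact_mod_cast hKg
          linarith
        rw [hJ, hmax]; push_cast; ring
      · refine ⟨(K - g) + 2*(n:ℤ), ?_, by omega, by omega, ?_⟩
        · have hmax : max eps (|lam| - gam) = (K:ℝ)/2 - (g:ℝ)/2 := by
            rw [he, habs, hg]
            apply max_eq_right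
            have : (g:ℝ) ≤ K := by exact_mod_cast hKg
            linarith
          rw [hJ, hmax]; push_cast; ring
        · rcases hKk with h | h <;> omega
    · have he : eps = 1/2 := heps1 hpar
      have hodd : (k + (g:ℤ)) % 2 = 1 := by
        by_contra h
        obtain ⟨m, hm⟩ : ∃ m : ℤ, k + (g:ℤ) = 2*m := ⟨(k + g)/2, by omega⟩
        refine hpar ⟨m, ?_⟩
        rw [hk, hg]
        have : (k:ℝ) + g = 2*m := by exact_mod_cast hm
        linarith
      rcases le_total K (g+1) with hKg | hKg
      · refine ⟨1 + 2*(n:ℤ), ?_, by positivity, ?_, ?_⟩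
        · have hmax : max eps (|lam| - gam) = 1/2 := by
            rw [he, habs, hg]
            apply max_eq_left
            have : (K:ℝ) ≤ (g:ℝ) + 1 := by exact_mod_cast hKg
            linarith
          rw [hJ, hmax]; push_cast; ring
        · omega
        · rcases hKk with h | h <;> omega
      · refine ⟨(K - g) + 2*(n:ℤ), ?_, by omega, by omega, ?_⟩
        · have hmax : max eps (|lam| - gam) = (K:ℝ)/2 - (g:ℝ)/2 := by
            rw [he, habs, hg]
            apply max_eq_right
            have : ((g:ℝ)+1) ≤ K := by exact_mod_cast hKg
            linarith
          rw [hJ, hmax]; push_cast; ring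
        · rcases hKk with h | h <;> omega
  have hJ2 : J = (j:ℝ)/2 := by linarith
  -- the counting finset
  set F : Finset ℕ := (Finset.range (g+1)).filter (fun i => |(k:ℤ) - g + 2*i| ≤ j) with hF
  have hset : {ν ∈ FIdx gam | ∃ m : ℕ, J = |lam + ν| + m}
      = (fun i : ℕ => -(g:ℝ)/2 + i) '' ↑F := by
    ext ν
    simp only [Set.mem_setOf_eq, Set.mem_image, Finset.mem_coe, hF, Finset.mem_filter,
      Finset.mem_range, FIdx]
    constructor
    · rintro ⟨⟨⟨i, hi⟩, hle⟩, m, hm⟩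
      have hig : i ≤ g := by
        have h1 : -gam + (i:ℝ) ≤ gam := by rw [← hi]; exact hle
        rw [hg] at h1
        have : (i:ℝ) ≤ g := by linarith
        exact_mod_cast this
      have hsum : lam + ν = ((k - g + 2*i : ℤ):ℝ)/2 := by
        rw [hk, hi, hg]; push_cast; ring
      have habs2 : |lam + ν| = ((|k - (g:ℤ) + 2*i| : ℤ):ℝ)/2 := by
        rw [hsum, abs_div, abs_two, Int.cast_abs]
      have hjm : j = |k - (g:ℤ) + 2*i| + 2*(m:ℤ) := by
        have : (j:ℝ) = ((|k - (g:ℤ) + 2*i| : ℤ):ℝ) + 2*m := by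
          rw [hj2, hm, habs2]; ring
        exact_mod_cast this
      exact ⟨i, ⟨by omega, by omega⟩, by rw [hi, hg]; ring⟩
    · rintro ⟨i, ⟨hig, habsle⟩, rfl⟩
      have hsum : lam + (-(g:ℝ)/2 + i) = ((k - g + 2*i : ℤ):ℝ)/2 := by
        rw [hk]; push_cast; ring
      have habs2 : |lam + (-(g:ℝ)/2 + i)| = ((|k - (g:ℤ) + 2*i| : ℤ):ℝ)/2 := by
        rw [hsum, abs_div, abs_two, Int.cast_abs]
      have hpar2 : (j - |k - (g:ℤ) + 2*i|) % 2 = 0 := by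
        rcases abs_choice (k - (g:ℤ) + 2*i) with h | h <;> omega
      obtain ⟨m, hm⟩ : ∃ m : ℕ, j = |k - (g:ℤ) + 2*i| + 2*(m:ℤ) :=
        ⟨((j - |k - (g:ℤ) + 2*i|)/2).toNat, by omega⟩
      refine ⟨⟨⟨i, by rw [hg]; ring⟩, ?_⟩, m, ?_⟩
      · rw [hg]
        have : (i:ℝ) ≤ g := by exact_mod_cast Nat.lt_succ_iff.mp hig
        linarith
      · rw [habs2, hJ2]
        have : (j:ℝ) = ((|k - (g:ℤ) + 2*i| : ℤ):ℝ) + 2*m := by exact_mod_cast hm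
        linarith
  have hinj : Function.Injective (fun i : ℕ => -(g:ℝ)/2 + (i:ℝ)) := by
    intro a b hab
    simp only at hab
    have : (a:ℝ) = b := by linarith
    exact_mod_cast this
  have hcard : {ν ∈ FIdx gam | ∃ m : ℕ, J = |lam + ν| + m}.ncard = F.card := by
    rw [hset, Set.ncard_image_of_injective _ hinj, Set.ncard_coe_finset]
  obtain ⟨a, ha⟩ : ∃ a : ℤ, 2*a = g - k - j := ⟨(g - k - j)/2, by omega⟩
  obtain ⟨b, hb⟩ : ∃ b : ℤ, 2*b = g - k + j := ⟨(g - k + j)/2, by omega⟩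
  have hb0 : 0 ≤ b := by rcases hKk with h | h <;> omega
  have hag : a ≤ (g:ℤ) := by rcases hKk with h | h <;> omega
  obtain ⟨lo, hlo⟩ : ∃ lo : ℕ, (lo:ℤ) = max 0 a :=
    ⟨(max 0 a).toNat, Int.toNat_of_nonneg (le_max_left _ _)⟩
  obtain ⟨hi, hhi⟩ : ∃ hi : ℕ, (hi:ℤ) = min (g:ℤ) b :=
    ⟨(min (g:ℤ) b).toNat, Int.toNat_of_nonneg (le_min (by positivity) hb0)⟩
  have hFIcc : F = Finset.Icc lo hi := by
    ext i
    simp only [hF, Finset.mem_filter, Finset.mem_range, Finset.mem_Icc, abs_le]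
    omega
  have hcard2 : F.card = hi + 1 - lo := by rw [hFIcc, Nat.card_Icc]
  have hlohi : lo ≤ hi + 1 := by omega
  have hcR : ({ν ∈ FIdx gam | ∃ m : ℕ, J = |lam + ν| + m}.ncard : ℝ) = (hi:ℝ) + 1 - lo := by
    rw [hcard, hcard2, Nat.cast_sub hlohi]
    push_cast; ring
  constructor
  · intro hle
    rw [abs_le, habs, hg, hJ2] at hle
    have h1 : K - (g:ℤ) ≤ j := by
      have : ((K - g : ℤ):ℝ) ≤ (j:ℝ) := by push_cast; linarith [hle.2]
      exact_mod_cast this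
    have h2 : (g:ℤ) - K ≤ j := by
      have : ((g - K : ℤ):ℝ) ≤ (j:ℝ) := by push_cast; linarith [hle.1]
      exact_mod_cast this
    obtain ⟨c, hc⟩ : ∃ c : ℤ, 2*c = j + g - K := by
      rcases hKk with h | h
      · exact ⟨(j + g - K)/2, by omega⟩
      · exact ⟨(j + g - K)/2, by omega⟩
    have key : (hi:ℤ) + 1 - lo = min (c+1) ((g:ℤ)+1) := by
      rcases hKk with h | h <;> omega
    rw [hcR, hJ2, hg, habs]
    have keyR : (hi:ℝ) + 1 - lo = min ((c:ℝ)+1) ((g:ℝ)+1) := by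
      have h3 := congrArg (fun z : ℤ => (z:ℝ)) key
      push_cast at h3
      exact h3
    have hcR2 : (c:ℝ) = (j:ℝ)/2 + (g:ℝ)/2 - (K:ℝ)/2 := by
      have h4 : ((2*c : ℤ):ℝ) = ((j + g - K : ℤ):ℝ) := by exact_mod_cast hc
      push_cast at h4; linarith
    have e1 : (j:ℝ)/2 + (g:ℝ)/2 - (K:ℝ)/2 + 1 = (c:ℝ) + 1 := by linarith
    have e2 : 2*((g:ℝ)/2) + 1 = (g:ℝ) + 1 := by ring
    rw [e1, e2]
    exact keyR
  · intro hlt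
    rcases abs_cases (|lam| - gam) with ⟨he, hsign⟩ | ⟨he, hsign⟩
    · exfalso
      rw [he, habs, hg, hJ2] at hlt
      have h1 : (j:ℝ) < ((K - g:ℤ):ℝ) := by push_cast; linarith
      have h2 : j < K - (g:ℤ) := by exact_mod_cast h1
      omega
    · rw [he, habs, hg, hJ2] at hlt
      have h1 : (j:ℝ) < ((g - K:ℤ):ℝ) := by push_cast; linarith
      have h2 : j < (g:ℤ) - K := by exact_mod_cast h1
      have key : (hi:ℤ) + 1 - lo = j + 1 := by rcases hKk with h | h <;> omega
      rw [hcR, hJ2]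
      have h3 := congrArg (fun z : ℤ => (z:ℝ)) key
      push_cast at h3
      linarith
end
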